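/- arXiv:0912.0798 — 2 statements merged into one kernel-verified Lean document; each statement's English description precedes it below -/
import Mathlib

section
/- Every permutation appearing in the product σ * τ (for σ ∈ S_k, τ ∈ S_l) is a permutation π of S_{k+l} such that the standardization of the first k entries of π is σ and the standardization of the last l entries is τ; conversely, every such π appears exactly once in σ * τ. -/
/-! A summand `σ|_A . τ|_B` is determined by the set `A` of its first `k` values: its two
blocks are the increasing enumerations of `A` and `Aᶜ`, precomposed with `σ` and `τ`.
A tuple standardizes to `σ` exactly when it becomes strictly increasing after precomposing
with `σ⁻¹`, so `π` has the two prescribed standardizations iff `π` is the summand for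
`A = π({1, …, k})`; distinct sets `A` give distinct summands, hence multiplicity one. -/

open Equiv

/-- `σ` is the standardization of the tuple `u`: it preserves relative order. -/
def IsStd {k : ℕ} {α : Type*} [LinearOrder α] (u : Fin k → α) (σ : Equiv.Perm (Fin k)) : Prop :=
  ∀ i j, σ i < σ j ↔ u i < u j

/-- The permutation `σ|_A . τ|_B` (concatenation), where `B = Aᶜ`: the first `k` values
are the elements of `A` arranged in the relative order prescribed by `σ`, and the last
`l` values are the elements of `Aᶜ` arranged in the relative order prescribed by `τ`. -/
def concatPerm {k l : ℕ} (σ : Equiv.Perm (Fin k)) (τ : Equiv.Perm (Fin l))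
    (A : Finset (Fin (k + l))) (hA : A.card = k) : Equiv.Perm (Fin (k + l)) :=
  finSumFinEquiv.symm.trans
    ((Equiv.sumCongr (σ.trans (A.orderIsoOfFin hA).toEquiv)
        (τ.trans ((Aᶜ).orderIsoOfFin
          (by rw [Finset.card_compl, hA, Fintype.card_fin]; omega)).toEquiv)).trans
      ((Equiv.sumCongr (Equiv.refl _)
          (Equiv.subtypeEquivRight (fun x => Finset.mem_compl))).trans
        (Equiv.sumCompl (· ∈ A))))

/-- The Malvenuto–Reutenauer product `σ * τ`, as the multiset of its summands:
`σ * τ = Σ_{A ⊔ B = {1,…,k+l}, |A| = k} σ|_A . τ|_B`. -/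
def mrProd {k l : ℕ} (σ : Equiv.Perm (Fin k)) (τ : Equiv.Perm (Fin l)) :
    Multiset (Equiv.Perm (Fin (k + l))) :=
  (Finset.univ.filter (fun A : Finset (Fin (k + l)) => A.card = k)).attach.val.map
    (fun A => concatPerm σ τ A.1 (by have h := A.2; simp only [Finset.mem_filter] at h; exact h.2))

lemma isStd_iff_strictMono {k : ℕ} {α : Type*} [LinearOrder α] {u : Fin k → α}
    {σ : Equiv.Perm (Fin k)} : IsStd u σ ↔ StrictMono (u ∘ σ.symm) := by
  refine ⟨fun h a b hab => ?_, fun h i j => ?_⟩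
  · simpa using (h (σ.symm a) (σ.symm b)).1 (by simpa using hab)
  · simpa using (h.lt_iff_lt (a := σ i) (b := σ j)).symm

lemma card_compl_eq_of_card_eq {k l : ℕ} {A : Finset (Fin (k + l))} (hA : A.card = k) :
    Aᶜ.card = l := by
  rw [Finset.card_compl, hA, Fintype.card_fin]; omega

section concatPerm

variable {k l : ℕ} (σ : Equiv.Perm (Fin k)) (τ : Equiv.Perm (Fin l))
  {A : Finset (Fin (k + l))} (hA : A.card = k)

@[simp]
lemma concatPerm_castAdd (i : Fin k) :
    concatPerm σ τ A hA (Fin.castAdd l i) = A.orderEmbOfFin hA (σ i) := by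
  simp [concatPerm]

@[simp]
lemma concatPerm_natAdd (j : Fin l) :
    concatPerm σ τ A hA (Fin.natAdd k j) =
      Aᶜ.orderEmbOfFin (card_compl_eq_of_card_eq hA) (τ j) := by
  simp [concatPerm]

lemma range_concatPerm_castAdd :
    Set.range (fun i => concatPerm σ τ A hA (Fin.castAdd l i)) = A := by
  simp only [concatPerm_castAdd]
  exact (EquivLike.range_comp _ σ).trans (A.range_orderEmbOfFin hA)

lemma concatPerm_injective {B : Finset (Fin (k + l))} (hB : B.card = k)
    (h : concatPerm σ τ A hA = concatPerm σ τ B hB) : A = B := by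
  rw [← Finset.coe_inj, ← range_concatPerm_castAdd σ τ hA, ← range_concatPerm_castAdd σ τ hB,
    h]

lemma isStd_concatPerm :
    IsStd (fun i => concatPerm σ τ A hA (Fin.castAdd l i)) σ ∧
      IsStd (fun j => concatPerm σ τ A hA (Fin.natAdd k j)) τ := by
  simp only [isStd_iff_strictMono, concatPerm_castAdd, concatPerm_natAdd]
  exact ⟨fun a b hab => by simpa using hab, fun a b hab => by simpa using hab⟩

lemma eq_concatPerm_of_strictMono {π : Equiv.Perm (Fin (k + l))}
    (hmemA : ∀ i, π (Fin.castAdd l i) ∈ A) (hmemAc : ∀ j, π (Fin.natAdd k j) ∉ A)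
    (hmono₁ : StrictMono (fun a => π (Fin.castAdd l (σ.symm a))))
    (hmono₂ : StrictMono (fun b => π (Fin.natAdd k (τ.symm b)))) :
    π = concatPerm σ τ A hA := by
  have h₁ := Finset.orderEmbOfFin_unique hA (fun a => hmemA _) hmono₁
  have h₂ := Finset.orderEmbOfFin_unique (card_compl_eq_of_card_eq hA)
    (fun b => Finset.mem_compl.2 (hmemAc _)) hmono₂
  refine Equiv.ext fun x => Fin.addCases (fun i => ?_) (fun j => ?_) x
  · simpa using congrFun h₁ (σ i)
  · simpa using congrFun h₂ (τ j)

end concatPerm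

lemma exists_eq_concatPerm_of_isStd {k l : ℕ} {σ : Equiv.Perm (Fin k)}
    {τ : Equiv.Perm (Fin l)}
    {π : Equiv.Perm (Fin (k + l))} (h₁ : IsStd (fun i => π (Fin.castAdd l i)) σ)
    (h₂ : IsStd (fun j => π (Fin.natAdd k j)) τ) :
    ∃ (A : Finset (Fin (k + l))) (hA : A.card = k), π = concatPerm σ τ A hA := by
  have hinj : Function.Injective (fun i => π (Fin.castAdd l i)) :=
    π.injective.comp (Fin.castAdd_injective k l)
  refine ⟨Finset.univ.image (fun i => π (Fin.castAdd l i)),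
    by simp [Finset.card_image_of_injective _ hinj], ?_⟩
  refine eq_concatPerm_of_strictMono σ τ _
    (fun i => Finset.mem_image_of_mem _ (Finset.mem_univ i)) ?_
    (isStd_iff_strictMono.1 h₁) (isStd_iff_strictMono.1 h₂)
  intro j hj
  obtain ⟨i, -, hi⟩ := Finset.mem_image.1 hj
  have := congrArg Fin.val (π.injective hi)
  simp only [Fin.val_castAdd, Fin.val_natAdd] at this
  omega

lemma mem_mrProd {k l : ℕ} {σ : Equiv.Perm (Fin k)} {τ : Equiv.Perm (Fin l)}
    {π : Equiv.Perm (Fin (k + l))} :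
    π ∈ mrProd σ τ ↔
      ∃ (A : Finset (Fin (k + l))) (hA : A.card = k), π = concatPerm σ τ A hA := by
  refine ⟨fun hπ => ?_, ?_⟩
  · obtain ⟨⟨A, hA⟩, -, rfl⟩ := Multiset.mem_map.1 hπ
    exact ⟨A, (Finset.mem_filter.1 hA).2, rfl⟩
  · rintro ⟨A, hA, rfl⟩
    exact Multiset.mem_map.2
      ⟨⟨A, by simp [hA]⟩, Finset.mem_def.1 (Finset.mem_attach _ _), rfl⟩

lemma nodup_mrProd {k l : ℕ} (σ : Equiv.Perm (Fin k)) (τ : Equiv.Perm (Fin l)) :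
    (mrProd σ τ).Nodup :=
  (Finset.nodup _).map_on fun _ _ _ _ h => Subtype.ext (concatPerm_injective σ τ _ _ h)

/-- A permutation `π ∈ S_{k+l}` appears in `σ * τ` iff the standardization of its first
`k` entries is `σ` and the standardization of its last `l` entries is `τ`; moreover every
such `π` appears exactly once. -/
theorem mem_mrProd_iff {k l : ℕ} (σ : Equiv.Perm (Fin k)) (τ : Equiv.Perm (Fin l))
    (π : Equiv.Perm (Fin (k + l))) :
    (π ∈ mrProd σ τ ↔
      IsStd (fun i : Fin k => π (Fin.castAdd l i)) σ ∧
      IsStd (fun j : Fin l => π (Fin.natAdd k j)) τ) ∧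
    (π ∈ mrProd σ τ → (mrProd σ τ).count π = 1) := by
  refine ⟨⟨fun hπ => ?_, fun ⟨h₁, h₂⟩ => mem_mrProd.2 (exists_eq_concatPerm_of_isStd h₁ h₂)⟩,
    Multiset.count_eq_one_of_mem (nodup_mrProd σ τ)⟩
  obtain ⟨A, hA, rfl⟩ := mem_mrProd.1 hπ
  exact isStd_concatPerm σ τ hA
end

section
/- Every permutation π appearing in Ψ*(T_1) * Ψ*(T_2), where T_1 ∈ Y_k and T_2 ∈ Y_l, has Up-Down sequence equal to either Q(T_1) followed by +1 followed by Q(T_2), or Q(T_1) followed by −1 followed by Q(T_2). -/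
open Equiv

/-- Auxiliary recursion (on a fuel bounding the length): the unlabeled binary tree of a
word of distinct integers, obtained by putting the position of the minimum at the root,
with left subtree built from the prefix before the minimum and right subtree from the
suffix after it. -/
def shapeOfAux : ℕ → List ℕ → Tree Unit
  | 0, _ => Tree.nil
  | fuel + 1, l =>
    if l = [] then Tree.nil
    else
      let m := l.min?.getD 0
      let i := l.idxOf m
      Tree.node () (shapeOfAux fuel (l.take i)) (shapeOfAux fuel (l.drop (i + 1)))

/-- The unlabeled binary tree underlying the increasing binary tree of a word. -/
def shapeOfList (l : List ℕ) : Tree Unit := shapeOfAux l.length l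

/-- `Ψ : S_n → Y_n` sends a permutation to the underlying unlabeled binary tree of its
increasing binary tree. -/
def Psi {n : ℕ} (σ : Equiv.Perm (Fin n)) : Tree Unit :=
  shapeOfList (List.ofFn fun i => (σ i : ℕ))

/-- `Ψ*(T) = Σ_{σ : Ψ(σ) = T} σ`, as the multiset of its summands. -/
def PsiStar (n : ℕ) (T : Tree Unit) : Multiset (Equiv.Perm (Fin n)) :=
  (Finset.univ.filter (fun σ : Equiv.Perm (Fin n) => Psi σ = T)).val

/-- The bilinear extension of the Malvenuto–Reutenauer product to formal sums
(multisets) of permutations. -/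
def mrProdSum {k l : ℕ} (s : Multiset (Equiv.Perm (Fin k))) (t : Multiset (Equiv.Perm (Fin l))) :
    Multiset (Equiv.Perm (Fin (k + l))) :=
  s.bind fun σ => t.bind fun τ => mrProd σ τ

/-!
`Ψ` splits a word at its minimum and recurses on both sides, so two words of distinct letters
with the same tree have their minimum at the same position `p` (the size of the left subtree).
Both words descend at `p - 1` and ascend at `p`, and by induction they have the same Up-Down
sequence on the prefix before `p` and on the suffix after it. In `σ|_A . τ|_B` the first `k`
values are an order-preserving relabelling of the values of `σ` and the last `l` values of those
of `τ`, so these two blocks have the Up-Down sequences of `σ` and `τ`.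
-/

def minIdx (l : List ℕ) : ℕ := l.idxOf (l.min?.getD 0)

lemma minIdx_lt_length {l : List ℕ} (hl : l ≠ []) : minIdx l < l.length := by
  obtain ⟨m, hm⟩ := Option.isSome_iff_exists.mp (List.isSome_min?_of_ne_nil hl)
  rw [minIdx, hm, Option.getD_some]
  exact List.idxOf_lt_length_iff.mpr (List.min?_mem hm)

lemma getElem_minIdx_lt {l : List ℕ} (hl : l.Nodup) {p q : ℕ} (hp : p < l.length)
    (hq : q < l.length) (hpm : p = minIdx l) (hqp : q ≠ p) : l[p] < l[q] := by
  subst hpm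
  obtain ⟨m, hm⟩ := Option.isSome_iff_exists.mp
    (List.isSome_min?_of_ne_nil (List.ne_nil_of_mem (List.getElem_mem hq)))
  have hval : l[minIdx l] = m := by
    simp only [minIdx, hm, Option.getD_some]
    exact List.getElem_idxOf (by simpa [minIdx, hm] using hp)
  refine lt_of_le_of_ne ?_ fun h => hqp (hl.getElem_inj_iff.mp h).symm
  exact hval ▸ (List.le_min?_iff hm).mp le_rfl _ (List.getElem_mem hq)

lemma shapeOfAux_succ_of_ne_nil (n : ℕ) {l : List ℕ} (hl : l ≠ []) :
    shapeOfAux (n + 1) l = BinaryTree.node () (shapeOfAux n (l.take (minIdx l)))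
      (shapeOfAux n (l.drop (minIdx l + 1))) := by
  rw [shapeOfAux, if_neg hl]
  rfl

lemma shapeOfAux_eq_shapeOfList {n : ℕ} {l : List ℕ} (hn : l.length ≤ n) :
    shapeOfAux n l = shapeOfList l := by
  suffices ∀ n n' (l : List ℕ), l.length ≤ n → l.length ≤ n' →
      shapeOfAux n l = shapeOfAux n' l from this n _ l hn le_rfl
  intro n
  induction n with
  | zero =>
    intro n' l h _
    rw [List.length_eq_zero_iff.mp (Nat.le_zero.mp h)]
    cases n' <;> simp [shapeOfAux]
  | succ n ih =>
    intro n' l h h'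
    rcases eq_or_ne l [] with rfl | hl
    · cases n' <;> simp [shapeOfAux]
    obtain ⟨n', rfl⟩ : ∃ m, n' = m + 1 :=
      Nat.exists_eq_add_one.mpr (lt_of_lt_of_le (List.length_pos_iff.mpr hl) h')
    have hp := minIdx_lt_length hl
    rw [shapeOfAux_succ_of_ne_nil _ hl, shapeOfAux_succ_of_ne_nil _ hl,
      ih n' _ (by grind) (by grind), ih n' (l.drop _) (by grind) (by grind)]

lemma shapeOfList_of_ne_nil {l : List ℕ} (hl : l ≠ []) :
    shapeOfList l = BinaryTree.node () (shapeOfList (l.take (minIdx l)))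
      (shapeOfList (l.drop (minIdx l + 1))) := by
  obtain ⟨n, hn⟩ := Nat.exists_eq_add_one.mpr (List.length_pos_iff.mpr hl)
  have hp := minIdx_lt_length hl
  rw [shapeOfList, hn, shapeOfAux_succ_of_ne_nil _ hl, shapeOfAux_eq_shapeOfList (by grind),
    shapeOfAux_eq_shapeOfList (by grind)]

lemma numNodes_shapeOfList (l : List ℕ) : BinaryTree.numNodes (shapeOfList l) = l.length := by
  induction h : l.length using Nat.strong_induction_on generalizing l with
  | _ n ih =>
    rcases eq_or_ne l [] with rfl | hl
    · subst h; rfl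
    have hp := minIdx_lt_length hl
    rw [shapeOfList_of_ne_nil hl]
    simp only [BinaryTree.numNodes]
    rw [ih _ (by grind) _ rfl, ih _ (by grind) _ rfl]
    grind

lemma minIdx_eq_and_subtrees_eq_of_shapeOfList_eq {l₁ l₂ : List ℕ} (hl₁ : l₁ ≠ [])
    (hl₂ : l₂ ≠ []) (h : shapeOfList l₁ = shapeOfList l₂) :
    minIdx l₁ = minIdx l₂ ∧
      shapeOfList (l₁.take (minIdx l₁)) = shapeOfList (l₂.take (minIdx l₂)) ∧
      shapeOfList (l₁.drop (minIdx l₁ + 1)) = shapeOfList (l₂.drop (minIdx l₂ + 1)) := by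
  rw [shapeOfList_of_ne_nil hl₁, shapeOfList_of_ne_nil hl₂, BinaryTree.node.injEq] at h
  obtain ⟨-, hleft, hright⟩ := h
  have hlen := congrArg BinaryTree.numNodes hleft
  rw [numNodes_shapeOfList, numNodes_shapeOfList, List.length_take, List.length_take] at hlen
  have := minIdx_lt_length hl₁
  have := minIdx_lt_length hl₂
  exact ⟨by omega, hleft, hright⟩

theorem getElem_lt_getElem_succ_iff_of_shapeOfList_eq {l₁ l₂ : List ℕ} (hd₁ : l₁.Nodup)
    (hd₂ : l₂.Nodup) (hs : shapeOfList l₁ = shapeOfList l₂) {i : ℕ}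
    (hi₁ : i + 1 < l₁.length) (hi₂ : i + 1 < l₂.length) :
    l₁[i] < l₁[i + 1] ↔ l₂[i] < l₂[i + 1] := by
  obtain ⟨n, hn⟩ : ∃ n, l₁.length < n := ⟨_, Nat.lt_succ_self _⟩
  induction n generalizing l₁ l₂ i with
  | zero => omega
  | succ n ih =>
    have hl₁ : l₁ ≠ [] := List.ne_nil_of_length_pos (by omega)
    have hl₂ : l₂ ≠ [] := List.ne_nil_of_length_pos (by omega)
    obtain ⟨hp, hleft, hright⟩ := minIdx_eq_and_subtrees_eq_of_shapeOfList_eq hl₁ hl₂ hs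
    have hp₁ := minIdx_lt_length hl₁
    have hp₂ := minIdx_lt_length hl₂
    set p := minIdx l₁
    rcases lt_trichotomy (i + 1) p with hip | hip | hip
    · have := ih (hd₁.sublist (List.take_sublist _ _)) (hd₂.sublist (List.take_sublist _ _))
        hleft (i := i) (by grind) (by grind) (by grind)
      rwa [List.getElem_take, List.getElem_take, List.getElem_take, List.getElem_take] at this
    · exact iff_of_false
        (not_lt.mpr (getElem_minIdx_lt hd₁ hi₁ (by omega) hip (by omega)).le)
        (not_lt.mpr (getElem_minIdx_lt hd₂ hi₂ (by omega) (hip.trans hp) (by omega)).le)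
    obtain rfl | hpi := eq_or_lt_of_le (Nat.le_of_lt_succ hip)
    · exact iff_of_true (getElem_minIdx_lt hd₁ (by omega) hi₁ rfl (by omega))
        (getElem_minIdx_lt hd₂ (by omega) hi₂ hp (by omega))
    obtain ⟨j, rfl⟩ := Nat.exists_eq_add_of_lt hpi
    have := ih (hd₁.sublist (List.drop_sublist _ _)) (hd₂.sublist (List.drop_sublist _ _))
      hright (i := j) (by grind) (by grind) (by grind)
    simp only [List.getElem_drop] at this
    convert this using 3 <;> omega

theorem lt_succ_iff_of_Psi_eq {n : ℕ} {σ σ' : Equiv.Perm (Fin n)} (h : Psi σ = Psi σ')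
    (i : ℕ) (hi : i + 1 < n) :
    σ ⟨i, by omega⟩ < σ ⟨i + 1, hi⟩ ↔ σ' ⟨i, by omega⟩ < σ' ⟨i + 1, hi⟩ := by
  have hnodup (ρ : Equiv.Perm (Fin n)) : (List.ofFn fun x => (ρ x : ℕ)).Nodup :=
    List.nodup_ofFn.mpr (Fin.val_injective.comp ρ.injective)
  have := getElem_lt_getElem_succ_iff_of_shapeOfList_eq (hnodup σ) (hnodup σ') h (i := i)
    (by rwa [List.length_ofFn]) (by rwa [List.length_ofFn])
  simpa only [List.getElem_ofFn, Fin.lt_def] using this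

lemma concatPerm_castAdd_lt_iff {k l : ℕ} (σ : Equiv.Perm (Fin k)) (τ : Equiv.Perm (Fin l))
    (A : Finset (Fin (k + l))) (hA : A.card = k) (i j : Fin k) :
    concatPerm σ τ A hA (Fin.castAdd l i) < concatPerm σ τ A hA (Fin.castAdd l j) ↔
      σ i < σ j := by
  simp [concatPerm]

lemma concatPerm_natAdd_lt_iff {k l : ℕ} (σ : Equiv.Perm (Fin k)) (τ : Equiv.Perm (Fin l))
    (A : Finset (Fin (k + l))) (hA : A.card = k) (i j : Fin l) :
    concatPerm σ τ A hA (Fin.natAdd k i) < concatPerm σ τ A hA (Fin.natAdd k j) ↔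
      τ i < τ j := by
  simp [concatPerm]

lemma mem_PsiStar {n : ℕ} {T : BinaryTree Unit} {σ : Equiv.Perm (Fin n)} :
    σ ∈ PsiStar n T ↔ Psi σ = T := by
  simp [PsiStar]

lemma exists_eq_concatPerm_of_mem_mrProdSum {k l : ℕ} {s : Multiset (Equiv.Perm (Fin k))}
    {t : Multiset (Equiv.Perm (Fin l))} {π : Equiv.Perm (Fin (k + l))}
    (hπ : π ∈ mrProdSum s t) :
    ∃ σ ∈ s, ∃ τ ∈ t, ∃ A hA, π = concatPerm σ τ A hA := by
  simp only [mrProdSum, mrProd, Multiset.mem_bind, Multiset.mem_map] at hπ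
  obtain ⟨σ, hσ, τ, hτ, A, -, rfl⟩ := hπ
  exact ⟨σ, hσ, τ, hτ, A.1, _, rfl⟩

/-- Every permutation `π` appearing in `Ψ*(T₁) * Ψ*(T₂)` has Up-Down sequence
`Q(T₁) · (±1) · Q(T₂)`: its Up-Down sequence agrees with the canopy `Q(T₁)` on the first
`k - 1` positions and with the canopy `Q(T₂)` on the last `l - 1` positions (position
`k` being free, i.e. `+1` or `−1`).  The canopies are represented by the common Up-Down
sequences of arbitrary permutations `σ₁, σ₂` projecting to `T₁, T₂` under `Ψ`. -/
theorem updown_of_mem_psiStar_mul {k l : ℕ} (T₁ T₂ : Tree Unit)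
    (π : Equiv.Perm (Fin (k + l))) (hπ : π ∈ mrProdSum (PsiStar k T₁) (PsiStar l T₂))
    (σ₁ : Equiv.Perm (Fin k)) (hσ₁ : Psi σ₁ = T₁)
    (σ₂ : Equiv.Perm (Fin l)) (hσ₂ : Psi σ₂ = T₂) :
    (∀ i : ℕ, (hi : i + 1 < k) →
      (π ⟨i, by omega⟩ < π ⟨i + 1, by omega⟩ ↔
        σ₁ ⟨i, Nat.lt_of_succ_lt hi⟩ < σ₁ ⟨i + 1, hi⟩)) ∧
    (∀ j : ℕ, (hj : j + 1 < l) →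
      (π ⟨k + j, by omega⟩ < π ⟨k + j + 1, by omega⟩ ↔
        σ₂ ⟨j, Nat.lt_of_succ_lt hj⟩ < σ₂ ⟨j + 1, hj⟩)) := by
  obtain ⟨σ, hσ, τ, hτ, A, hA, rfl⟩ := exists_eq_concatPerm_of_mem_mrProdSum hπ
  rw [mem_PsiStar] at hσ hτ
  refine ⟨fun i hi => ?_, fun j hj => ?_⟩
  · exact (concatPerm_castAdd_lt_iff σ τ A hA _ _).trans
      (lt_succ_iff_of_Psi_eq (hσ.trans hσ₁.symm) i hi)
  · exact (concatPerm_natAdd_lt_iff σ τ A hA _ _).trans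
      (lt_succ_iff_of_Psi_eq (hτ.trans hσ₂.symm) j hj)
end
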